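/- Let (X, π) be a link-connected weighted n-partite simplicial complex and let s = (s(1),…,s(n)) be any ordering of [n]. Then the second-largest singular value of the sequential sweep satisfies σ₂(Psq^{(s)})² ≤ 1 − ∏_{j=2}^{n} (1 − (ε^{s([j−1])→s(j)})²), where s([j−1]) = {s(1),…,s(j−1)}. Equivalently, Gap(Psq^{(s)}) = 1 − σ₂(Psq^{(s)}) ≥ 1 − √(1 − ∏_{j=2}^{n} (1 − (ε^{s([j−1])→s(j)})²)). -/

import Mathlib

open Finset
open scoped Classical

noncomputable section

namespace PaperFormal

/-- A weighted `n`-partite simplicial complex: a nonempty finite set `Ω` of `n`-tuples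
(the top faces, each tuple picking one element from each side `U i`) together with a
full-support probability distribution `π` on it. -/
structure WPC (n : ℕ) (U : Fin n → Type*) [∀ i, Fintype (U i)] [∀ i, DecidableEq (U i)] where
  Ω : Finset (∀ i, U i)
  nonempty : Ω.Nonempty
  π : (∀ i, U i) → ℝ
  nonneg : ∀ ω, 0 ≤ π ω
  support : ∀ ω, 0 < π ω ↔ ω ∈ Ω
  sum_one : ∑ ω : ∀ i, U i, π ω = 1

/-- Partial assignments to the coordinates in `S`. -/
abbrev PAssign {n : ℕ} (U : Fin n → Type*) (S : Finset (Fin n)) : Type _ :=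
  ∀ i : {x : Fin n // x ∈ S}, U i.1

variable {n : ℕ} {U : Fin n → Type*} [∀ i, Fintype (U i)] [∀ i, DecidableEq (U i)]

/-- Restriction of a tuple to the coordinates in `S`. -/
def restr (S : Finset (Fin n)) (ω : ∀ i, U i) : PAssign U S := fun i => ω i.1

/-- The unique assignment to the empty set of coordinates. -/
def emptyA : PAssign U (∅ : Finset (Fin n)) := fun i => absurd i.2 (Finset.notMem_empty i.1)

/-- Probability of the event `E` under `π`. -/
def pr (X : WPC n U) (E : (∀ i, U i) → Prop) : ℝ :=
  ∑ ω : ∀ i, U i, if E ω then X.π ω else 0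

lemma pr_congr (X : WPC n U) {E F : (∀ i, U i) → Prop} (h : ∀ ω, E ω ↔ F ω) :
    pr X E = pr X F :=
  Finset.sum_congr rfl fun ω _ => if_congr (h ω) rfl rfl

/-- The `S`-marginal of `π`, evaluated at the partial assignment `α`. -/
def marg (X : WPC n U) (S : Finset (Fin n)) (α : PAssign U S) : ℝ :=
  pr X fun ω => restr S ω = α

/-- The pinned marginal `π_T^{(α)}`: the probability that the coordinates in `T` agree
with `β`, conditioned on the coordinates in `S` agreeing with `α`. -/
def cmarg (X : WPC n U) {S T : Finset (Fin n)} (α : PAssign U S) (β : PAssign U T) : ℝ :=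
  pr X (fun ω => restr S ω = α ∧ restr T ω = β) / marg X S α

/-- The colored random walk `C_α^{I → J}`: entry `(τI, τJ)` is
`Pr[ω_J = τJ | ω_I = τI, ω_S = α]`. -/
def Cwalk (X : WPC n U) (S I J : Finset (Fin n)) (α : PAssign U S)
    (τI : PAssign U I) (τJ : PAssign U J) : ℝ :=
  pr X (fun ω => restr S ω = α ∧ restr I ω = τI ∧ restr J ω = τJ) /
    pr X (fun ω => restr S ω = α ∧ restr I ω = τI)

/-- The second largest singular value of a row-stochastic matrix `M` satisfying
`μA M = μB`, with respect to the inner products weighted by `μA` and `μB`, via its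
variational characterization
`σ₂(M) = sup { ⟨f, M g⟩_{μA} : ⟨f,1⟩_{μA} = ⟨g,1⟩_{μB} = 0, ‖f‖_{μA} = ‖g‖_{μB} = 1 }`. -/
def sigma2 {A B : Type*} [Fintype A] [Fintype B]
    (μA : A → ℝ) (μB : B → ℝ) (M : A → B → ℝ) : ℝ :=
  sSup { r : ℝ | ∃ f : A → ℝ, ∃ g : B → ℝ,
    (∑ a, μA a * f a) = 0 ∧ (∑ b, μB b * g b) = 0 ∧
    (∑ a, μA a * f a ^ 2) = 1 ∧ (∑ b, μB b * g b ^ 2) = 1 ∧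
    r = ∑ a, μA a * f a * ∑ b, M a b * g b }

/-- The second largest singular value `σ₂(C_α^{I → J})`, with respect to the inner
products weighted by the pinned marginals `π_I^{(α)}` and `π_J^{(α)}`. -/
def sigma2C (X : WPC n U) (S I J : Finset (Fin n)) (α : PAssign U S) : ℝ :=
  sigma2 (fun τI : PAssign U I => cmarg X α τI) (fun τJ : PAssign U J => cmarg X α τJ)
    (Cwalk X S I J α)

/-- `ε^{I → J}`: the maximum of `σ₂(C_α^{I → J})` over all partial assignments `α`
to the coordinates outside `I ∪ J` (realizable on `Ω`). -/
def epsIJ (X : WPC n U) (I J : Finset (Fin n)) : ℝ :=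
  sSup { r : ℝ | ∃ α : PAssign U (I ∪ J)ᶜ,
    0 < marg X (I ∪ J)ᶜ α ∧ r = sigma2C X (I ∪ J)ᶜ I J α }

/-- `π` is `(ε 0, …, ε (n-2))`-product: for every realizable pinning `α` of a set `S` of at
most `n - 2` coordinates, and all distinct `i, j ∉ S`, `σ₂(C_α^{i → j}) ≤ ε |S|`. -/
def isProduct (X : WPC n U) (ε : ℕ → ℝ) : Prop :=
  ∀ S : Finset (Fin n), S.card ≤ n - 2 → ∀ α : PAssign U S, 0 < marg X S α →
    ∀ i j : Fin n, i ∉ S → j ∉ S → i ≠ j → sigma2C X S {i} {j} α ≤ ε S.card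

/-- The update operator `Q_i`: resample the `i`-th coordinate according to `π`,
conditionally on all the other coordinates. -/
def Qmat (X : WPC n U) (i : Fin n) : Matrix (∀ i, U i) (∀ i, U i) ℝ :=
  Matrix.of fun ω ω' =>
    pr X (fun τ => τ = ω' ∧ restr {i}ᶜ τ = restr {i}ᶜ ω) /
      pr X (fun τ => restr {i}ᶜ τ = restr {i}ᶜ ω)

/-- The sequential sweep `P_seq^{(s)} = Q_{s 0} Q_{s 1} ⋯ Q_{s (n-1)}`. -/
def Psq (X : WPC n U) (s : Equiv.Perm (Fin n)) : Matrix (∀ i, U i) (∀ i, U i) ℝ :=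
  (List.ofFn fun j : Fin n => Qmat X (s j)).prod

/-- The second largest singular value of the sequential sweep, with respect to the
inner product weighted by its stationary distribution `π`. -/
def sigma2P (X : WPC n U) (s : Equiv.Perm (Fin n)) : ℝ :=
  sigma2 X.π X.π fun ω ω' => Psq X s ω ω'

/-- The link graph `G_α` of a pinning `α` of the coordinates in `S`: vertices are pairs
`(i, x)` with `i ∉ S`, and `(i,x)`, `(j,y)` are adjacent when `i ≠ j` and the event
`{ω_i = x, ω_j = y, ω_S = α}` has positive probability. -/
def linkGraph (X : WPC n U) (S : Finset (Fin n)) (α : PAssign U S) :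
    SimpleGraph ((i : Fin n) × U i) where
  Adj v w := v.1 ≠ w.1 ∧ v.1 ∉ S ∧ w.1 ∉ S ∧
    0 < pr X fun ω => restr S ω = α ∧ ω v.1 = v.2 ∧ ω w.1 = w.2
  symm := by
    constructor; rintro v w ⟨h1, h2, h3, h4⟩
    refine ⟨h1.symm, h3, h2, ?_⟩
    have e : pr X (fun ω => restr S ω = α ∧ ω w.1 = w.2 ∧ ω v.1 = v.2)
        = pr X (fun ω => restr S ω = α ∧ ω v.1 = v.2 ∧ ω w.1 = w.2) :=
      pr_congr X fun ω => by tauto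
    rw [e]; exact h4
  loopless := by constructor; rintro v ⟨h1, -⟩; exact h1 rfl

/-- `(X, π)` is link-connected: in every link graph (of a realizable pinning of at most
`n - 2` coordinates), every two valid vertices are connected by a path. -/
def linkConnected (X : WPC n U) : Prop :=
  ∀ S : Finset (Fin n), S.card ≤ n - 2 → ∀ α : PAssign U S, 0 < marg X S α →
    ∀ v w : (i : Fin n) × U i, v.1 ∉ S → w.1 ∉ S →
      0 < pr X (fun ω => restr S ω = α ∧ ω v.1 = v.2) →
      0 < pr X (fun ω => restr S ω = α ∧ ω w.1 = w.2) →
      (linkGraph X S α).Reachable v w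

/-- The stationary measure of the random walk on the link graph `G_α`. -/
def linkMeas (X : WPC n U) (S : Finset (Fin n)) (α : PAssign U S) :
    (i : Fin n) × U i → ℝ :=
  fun v => if v.1 ∈ S then 0 else
    (1 / ((n : ℝ) - (S.card : ℝ))) *
      (pr X (fun ω => restr S ω = α ∧ ω v.1 = v.2) / marg X S α)

/-- The random walk matrix `M_α` of the link graph `G_α`. -/
def linkWalk (X : WPC n U) (S : Finset (Fin n)) (α : PAssign U S) :
    (i : Fin n) × U i → (i : Fin n) × U i → ℝ :=
  fun v w =>
    if v.1 = w.1 ∨ v.1 ∈ S ∨ w.1 ∈ S then 0 else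
      (1 / ((n : ℝ) - (S.card : ℝ) - 1)) *
        (pr X (fun ω => restr S ω = α ∧ ω v.1 = v.2 ∧ ω w.1 = w.2) /
          pr X (fun ω => restr S ω = α ∧ ω v.1 = v.2))

/-- The second largest eigenvalue of a random walk matrix `M`, self-adjoint with respect
to the probability measure `μ`, via its variational characterization. -/
def lambda2 {A : Type*} [Fintype A] (μ : A → ℝ) (M : A → A → ℝ) : ℝ :=
  sSup { r : ℝ | ∃ f : A → ℝ,
    (∑ a, μ a * f a) = 0 ∧ (∑ a, μ a * f a ^ 2) = 1 ∧
    r = ∑ a, μ a * f a * ∑ b, M a b * f b }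

/-- `(X, π)` is a `(γ 0, …, γ (n-2))`-local spectral expander:
`λ₂(M_α) ≤ γ |S|` for every realizable pinning `α` of at most `n - 2` coordinates. -/
def isLocalExpander (X : WPC n U) (γ : ℕ → ℝ) : Prop :=
  ∀ S : Finset (Fin n), S.card ≤ n - 2 → ∀ α : PAssign U S, 0 < marg X S α →
    lambda2 (linkMeas X S α) (linkWalk X S α) ≤ γ S.card

/-- Kullback–Leibler divergence `D(μ ‖ ν) = Σ_a μ(a) log (μ(a) / ν(a))`. -/
def KL {A : Type*} [Fintype A] (μ ν : A → ℝ) : ℝ :=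
  ∑ a, μ a * Real.log (μ a / ν a)

/-- `μ` is a probability distribution supported on `{a | P a}`. -/
def distOn {A : Type*} [Fintype A] (P : A → Prop) (μ : A → ℝ) : Prop :=
  (∀ a, 0 ≤ μ a) ∧ (∑ a, μ a) = 1 ∧ ∀ a, ¬ P a → μ a = 0

/-- The `(I, J)` entropy contraction parameter `η^{I → J} = 1 - κ^{I → J}`, where
`κ^{I → J}` is the supremum of `D(μ C_α^{I→J} ‖ π_J^{(α)}) / D(μ ‖ π_I^{(α)})` over all
realizable pinnings `α` of the coordinates outside `I ∪ J` and all distributions `μ` on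
the assignments of `I` compatible with `α`. -/
def etaIJ (X : WPC n U) (I J : Finset (Fin n)) : ℝ :=
  1 - sSup { r : ℝ | ∃ α : PAssign U (I ∪ J)ᶜ, 0 < marg X (I ∪ J)ᶜ α ∧
    ∃ μ : PAssign U I → ℝ,
      distOn (fun τ => 0 < pr X fun ω => restr (I ∪ J)ᶜ ω = α ∧ restr I ω = τ) μ ∧
      KL μ (fun τ : PAssign U I => cmarg X α τ) ≠ 0 ∧
      r = KL (fun τJ : PAssign U J => ∑ τI : PAssign U I, μ τI * Cwalk X (I ∪ J)ᶜ I J α τI τJ)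
            (fun τJ : PAssign U J => cmarg X α τJ) /
          KL μ (fun τ : PAssign U I => cmarg X α τ) }

/-- The entropy contraction factor `EC(M) = 1 - sup_μ D(μ M ‖ π) / D(μ ‖ π)` of a random
walk matrix `M` with stationary distribution `π`. -/
def EC (X : WPC n U) (M : Matrix (∀ i, U i) (∀ i, U i) ℝ) : ℝ :=
  1 - sSup { r : ℝ | ∃ μ : (∀ i, U i) → ℝ, distOn (fun ω => ω ∈ X.Ω) μ ∧
    KL μ X.π ≠ 0 ∧ r = KL (Matrix.vecMul μ M) X.π / KL μ X.π }

/-- The `π`-weighted inner product on `ℝ^Ω`. -/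
def ip (X : WPC n U) (f g : {ω // ω ∈ X.Ω} → ℝ) : ℝ :=
  ∑ ω : {ω // ω ∈ X.Ω}, X.π ω.1 * f ω * g ω

/-- The indicator vector `u_α ∈ ℝ^Ω` of the partial assignment `α` to the coordinates
outside `T`. -/
def uvec (X : WPC n U) (T : Finset (Fin n)) (α : PAssign U Tᶜ) : {ω // ω ∈ X.Ω} → ℝ :=
  fun ω => if restr Tᶜ ω.1 = α then 1 else 0

/-- The subspace `U_T = span { u_α : α an assignment to the coordinates outside T }`. -/
def Uspan (X : WPC n U) (T : Finset (Fin n)) : Submodule ℝ ({ω // ω ∈ X.Ω} → ℝ) :=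
  Submodule.span ℝ { f | ∃ α : PAssign U Tᶜ, f = uvec X T α }

/-- The subspace of functions on `Ω` depending only on the coordinates outside `T`. -/
def Uinv (X : WPC n U) (T : Finset (Fin n)) : Submodule ℝ ({ω // ω ∈ X.Ω} → ℝ) where
  carrier := { f | ∀ ω ω' : {ω // ω ∈ X.Ω}, restr Tᶜ ω.1 = restr Tᶜ ω'.1 → f ω = f ω' }
  add_mem' := by
    intro f g hf hg ω ω' h
    simp only [Pi.add_apply, hf ω ω' h, hg ω ω' h]
  zero_mem' := by intro ω ω' h; rfl
  smul_mem' := by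
    intro c f hf ω ω' h
    simp only [Pi.smul_apply, hf ω ω' h]

/-- The orthogonal complement (with respect to `⟨·,·⟩_π`) of a subspace, as a set. -/
def orthC (X : WPC n U) (W : Submodule ℝ ({ω // ω ∈ X.Ω} → ℝ)) :
    Set ({ω // ω ∈ X.Ω} → ℝ) :=
  { f | ∀ g ∈ W, ip X f g = 0 }

/-- The cosine of the angle between two subspaces of `ℝ^Ω`:
`cos(A,B) = sup { ⟨u,v⟩_π : u ∈ A ∩ (A ⊓ B)ᗮ, v ∈ B ∩ (A ⊓ B)ᗮ, ‖u‖_π = ‖v‖_π = 1 }`. -/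
def cosAngle (X : WPC n U) (A B : Submodule ℝ ({ω // ω ∈ X.Ω} → ℝ)) : ℝ :=
  sSup { r : ℝ | ∃ u, u ∈ A ∧ u ∈ orthC X (A ⊓ B) ∧
    ∃ v, v ∈ B ∧ v ∈ orthC X (A ⊓ B) ∧
    ip X u u = 1 ∧ ip X v v = 1 ∧ r = ip X u v }

/-- The update operator `Q_i` as an operator on `ℝ^Ω`. -/
def Qop (X : WPC n U) (i : Fin n) (f : {ω // ω ∈ X.Ω} → ℝ) : {ω // ω ∈ X.Ω} → ℝ :=
  fun ω => ∑ ω' : {ω // ω ∈ X.Ω}, Qmat X i ω.1 ω'.1 * f ω'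

/-- Concatenation of partial assignments on disjoint coordinate sets. -/
def joinAssign {S T : Finset (Fin n)} (β : PAssign U S) (α : PAssign U T) :
    PAssign U (S ∪ T) :=
  fun i => if h : i.1 ∈ S then β ⟨i.1, h⟩
    else α ⟨i.1, (Finset.mem_union.mp i.2).resolve_left h⟩

/-- The `S`-marginal of a (not necessarily normalized) distribution `ν` on tuples. -/
def distMarg (ν : (∀ i, U i) → ℝ) (S : Finset (Fin n)) (a : PAssign U S) : ℝ :=
  ∑ ω : ∀ i, U i, if restr S ω = a then ν ω else 0

/-- The distribution `ν` conditioned on the `i`-th coordinate being `x`. -/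
def condAt (ν : (∀ i, U i) → ℝ) (i : Fin n) (x : U i) : (∀ i, U i) → ℝ :=
  fun ω => if ω i = x then ν ω / (∑ ω' : ∀ i, U i, if ω' i = x then ν ω' else 0) else 0

/-- The influence matrix `Inf_α` of the pinning `α` of the coordinates in `S`:
`Inf_α((i,x),(j,y)) = Pr[ω_j = y | ω_i = x, ω_S = α] - Pr[ω_j = y | ω_S = α]`
for `i ≠ j` outside `S`, and `0` otherwise. -/
def InfMat (X : WPC n U) (S : Finset (Fin n)) (α : PAssign U S) :
    Matrix ((i : Fin n) × U i) ((i : Fin n) × U i) ℝ :=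
  Matrix.of fun v w =>
    if v.1 = w.1 ∨ v.1 ∈ S ∨ w.1 ∈ S then 0 else
      pr X (fun ω => restr S ω = α ∧ ω v.1 = v.2 ∧ ω w.1 = w.2) /
          pr X (fun ω => restr S ω = α ∧ ω v.1 = v.2) -
        pr X (fun ω => restr S ω = α ∧ ω w.1 = w.2) / marg X S α

/-- `π` is `(c 0, …, c (n-2))`-spectrally independent: every (real) eigenvalue of the
influence matrix of a realizable pinning of at most `n - 2` coordinates is at most
`c |S|`. -/
def spectrallyIndependent (X : WPC n U) (c : ℕ → ℝ) : Prop :=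
  ∀ S : Finset (Fin n), S.card ≤ n - 2 → ∀ α : PAssign U S, 0 < marg X S α →
    ∀ r : ℝ,
      (∃ v : ((i : Fin n) × U i) → ℝ, v ≠ 0 ∧ (InfMat X S α).mulVec v = r • v) →
      r ≤ c S.card

end PaperFormal

namespace PaperFormal

variable {n : ℕ} {U : Fin n → Type*} [∀ i, Fintype (U i)] [∀ i, DecidableEq (U i)]

/-!
Write `⟨f, g⟩ = Σ π f g` and `V_K` for the functions of the coordinates outside `K`. The
operator `E[· | ω_{Kᶜ}]` is the `π`-orthogonal projection onto `V_K`, and `Q_i` is the one onto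
`V_{i}`. For a sweep `P = P' Q_i`, where `P'` updates the coordinates of `K` and `i ∉ K` is
updated first, and for `g ⊥ V_{K ∪ {i}}`, split `Q_i g = u + z` with `u = E[Q_i g | ω_{Kᶜ}]`.
Then `P'` fixes `u` and keeps `z ⊥ V_K`, so `‖P g‖² = ‖u‖² + ‖P' z‖²` and
`‖z‖² = ‖Q_i g‖² - ‖u‖²`. On each pinning `α` of the coordinates outside `K ∪ {i}`, `Q_i` acts
on `V_K ∩ V_{K ∪ {i}}ᗮ` as the colored walk `C_α^{K → i}` on centred functions, whence
`‖u‖ ≤ ε^{K → i} ‖g‖`. Induction on the sweep gives `‖P g‖² ≤ (1 - ∏ⱼ (1 - ε_j²)) ‖g‖²` for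
`g ⊥ constants`, which bounds `σ₂`.
-/

section WeightedInner

variable {A : Type*} [Fintype A] {μ : A → ℝ}

def wInner (μ f g : A → ℝ) : ℝ := ∑ a, μ a * f a * g a

lemma wInner_comm (μ f g : A → ℝ) : wInner μ f g = wInner μ g f := by
  simp only [wInner, mul_right_comm]

lemma wInner_self_eq (μ f : A → ℝ) : wInner μ f f = ∑ a, μ a * f a ^ 2 := by
  simp only [wInner, mul_assoc, sq]

lemma wInner_add_left (μ f g h : A → ℝ) :
    wInner μ (f + g) h = wInner μ f h + wInner μ g h := by
  simp only [wInner, Pi.add_apply, mul_add, add_mul, Finset.sum_add_distrib]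

lemma wInner_sub_left (μ f g h : A → ℝ) :
    wInner μ (f - g) h = wInner μ f h - wInner μ g h := by
  simp only [wInner, Pi.sub_apply, mul_sub, sub_mul, Finset.sum_sub_distrib]

lemma wInner_self_nonneg (hμ : ∀ a, 0 ≤ μ a) (f : A → ℝ) : 0 ≤ wInner μ f f :=
  Finset.sum_nonneg fun a _ => by rw [mul_assoc]; exact mul_nonneg (hμ a) (mul_self_nonneg _)

lemma wInner_sq_le (hμ : ∀ a, 0 ≤ μ a) (f g : A → ℝ) :
    wInner μ f g ^ 2 ≤ wInner μ f f * wInner μ g g := by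
  refine Finset.sum_sq_le_sum_mul_sum_of_sq_le_mul _ (fun a _ => ?_) (fun a _ => ?_)
    (fun a _ => le_of_eq (by ring)) <;>
  · rw [mul_assoc]; exact mul_nonneg (hμ a) (mul_self_nonneg _)

lemma wInner_add_self_of_eq_zero {f g : A → ℝ} (h : wInner μ f g = 0) :
    wInner μ (f + g) (f + g) = wInner μ f f + wInner μ g g := by
  rw [wInner_add_left, wInner_comm μ f, wInner_comm μ g, wInner_add_left, wInner_add_left,
    wInner_comm μ g f, h]
  ring

lemma sum_mul_div_sqrt_sq {h : A → ℝ} (hpos : 0 < ∑ a, μ a * h a ^ 2) :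
    ∑ a, μ a * (h a / √(∑ a, μ a * h a ^ 2)) ^ 2 = 1 := by
  simp only [div_pow, Real.sq_sqrt hpos.le, mul_div_assoc', ← Finset.sum_div]
  exact div_self hpos.ne'

end WeightedInner

section Sigma2

variable {A B : Type*} [Fintype A] [Fintype B] {μA : A → ℝ} {μB : B → ℝ} {M : A → B → ℝ}

def sigma2Values (μA : A → ℝ) (μB : B → ℝ) (M : A → B → ℝ) : Set ℝ :=
  { r : ℝ | ∃ f : A → ℝ, ∃ g : B → ℝ,
    (∑ a, μA a * f a) = 0 ∧ (∑ b, μB b * g b) = 0 ∧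
    (∑ a, μA a * f a ^ 2) = 1 ∧ (∑ b, μB b * g b ^ 2) = 1 ∧
    r = ∑ a, μA a * f a * ∑ b, M a b * g b }

lemma sigma2_eq_sSup : sigma2 μA μB M = sSup (sigma2Values μA μB M) := rfl

lemma sigma2_nonneg (hbdd : BddAbove (sigma2Values μA μB M)) : 0 ≤ sigma2 μA μB M := by
  rcases (sigma2Values μA μB M).eq_empty_or_nonempty with
    hempty | ⟨r, f, g, hf, hg, hf2, hg2, rfl⟩
  · rw [sigma2_eq_sSup, hempty, Real.sSup_empty]
  · have hneg : -(∑ a, μA a * f a * ∑ b, M a b * g b) ∈ sigma2Values μA μB M :=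
      ⟨-f, g, by simpa using hf, hg, by simpa using hf2, hg2, by simp [Finset.sum_neg_distrib]⟩
    have h1 := le_csSup hbdd ⟨f, g, hf, hg, hf2, hg2, rfl⟩
    have h2 := le_csSup hbdd hneg
    rw [sigma2_eq_sSup]
    linarith

lemma sigma2_eq_zero_of_subsingleton [Subsingleton A] : sigma2 μA μB M = 0 := by
  suffices sigma2Values μA μB M = ∅ by rw [sigma2_eq_sSup, this, Real.sSup_empty]
  refine Set.eq_empty_iff_forall_notMem.mpr ?_
  rintro r ⟨f, g, hf, -, hf2, -, -⟩
  obtain _ | ⟨⟨a⟩⟩ := isEmpty_or_nonempty A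
  · simp at hf2
  · rw [Fintype.sum_subsingleton _ a] at hf hf2
    rw [sq, ← mul_assoc, hf, zero_mul] at hf2
    exact zero_ne_one hf2

lemma sigma2Values_le_sqrt (hμA : ∀ a, 0 ≤ μA a) {c : ℝ}
    (h : ∀ g : B → ℝ, ∑ b, μB b * g b = 0 →
      ∑ a, μA a * (∑ b, M a b * g b) ^ 2 ≤ c * ∑ b, μB b * g b ^ 2) :
    ∀ r ∈ sigma2Values μA μB M, r ≤ √c := by
  rintro r ⟨f, g, -, hg, hf2, hg2, rfl⟩
  have hcs := wInner_sq_le hμA f fun a => ∑ b, M a b * g b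
  rw [wInner_self_eq, wInner_self_eq, hf2, one_mul] at hcs
  have := (hcs.trans (h g hg)).trans_eq (by rw [hg2, mul_one])
  exact (le_abs_self _).trans (Real.abs_le_sqrt this)

lemma sigma2_le_sqrt (hμA : ∀ a, 0 ≤ μA a) {c : ℝ}
    (h : ∀ g : B → ℝ, ∑ b, μB b * g b = 0 →
      ∑ a, μA a * (∑ b, M a b * g b) ^ 2 ≤ c * ∑ b, μB b * g b ^ 2) :
    sigma2 μA μB M ≤ √c :=
  Real.sSup_le (sigma2Values_le_sqrt hμA h) (Real.sqrt_nonneg c)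

lemma sq_sigma2_le (hμA : ∀ a, 0 ≤ μA a) {c : ℝ} (hc : 0 ≤ c)
    (h : ∀ g : B → ℝ, ∑ b, μB b * g b = 0 →
      ∑ a, μA a * (∑ b, M a b * g b) ^ 2 ≤ c * ∑ b, μB b * g b ^ 2) :
    sigma2 μA μB M ^ 2 ≤ c :=
  (pow_le_pow_left₀ (sigma2_nonneg ⟨√c, sigma2Values_le_sqrt hμA h⟩)
    (sigma2_le_sqrt hμA h) 2).trans_eq (Real.sq_sqrt hc)

end Sigma2

section Stochastic

variable {A B : Type*} [Fintype A] [Fintype B] {μA : A → ℝ} {μB : B → ℝ} {M : A → B → ℝ}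

structure IsStochasticMap (μA : A → ℝ) (μB : B → ℝ) (M : A → B → ℝ) : Prop where
  nonneg : ∀ a, 0 ≤ μA a
  entry_nonneg : ∀ a b, 0 ≤ M a b
  row_sum : ∀ a, μA a ≠ 0 → ∑ b, M a b = 1
  stationary : ∀ b, ∑ a, μA a * M a b = μB b

namespace IsStochasticMap

lemma sum_mul_mulVec (hM : IsStochasticMap μA μB M) (h : B → ℝ) :
    ∑ a, μA a * ∑ b, M a b * h b = ∑ b, μB b * h b := by
  simp only [Finset.mul_sum, ← mul_assoc]
  rw [Finset.sum_comm]
  simp only [← Finset.sum_mul, hM.stationary]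

lemma sum_sq_mulVec_le (hM : IsStochasticMap μA μB M) (g : B → ℝ) :
    ∑ a, μA a * (∑ b, M a b * g b) ^ 2 ≤ ∑ b, μB b * g b ^ 2 := by
  have hrow : ∀ a, μA a * (∑ b, M a b * g b) ^ 2 ≤ μA a * ∑ b, M a b * g b ^ 2 := by
    intro a
    rcases eq_or_ne (μA a) 0 with ha | ha
    · simp [ha]
    refine mul_le_mul_of_nonneg_left ?_ (hM.nonneg a)
    have hjensen := Finset.sum_sq_le_sum_mul_sum_of_sq_le_mul Finset.univ
      (r := fun b => M a b * g b) (f := fun b => M a b * g b ^ 2) (g := fun b => M a b)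
      (fun b _ => mul_nonneg (hM.entry_nonneg a b) (sq_nonneg _))
      (fun b _ => hM.entry_nonneg a b) (fun b _ => le_of_eq (by ring))
    rwa [hM.row_sum a ha, mul_one] at hjensen
  exact (Finset.sum_le_sum fun a _ => hrow a).trans_eq (hM.sum_mul_mulVec _)

lemma forall_sigma2Values_le_one (hM : IsStochasticMap μA μB M) :
    ∀ r ∈ sigma2Values μA μB M, r ≤ 1 := by
  simpa using sigma2Values_le_sqrt hM.nonneg (c := 1) fun g _ => by
    simpa using hM.sum_sq_mulVec_le g

lemma sigma2_nonneg (hM : IsStochasticMap μA μB M) : 0 ≤ sigma2 μA μB M :=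
  PaperFormal.sigma2_nonneg ⟨1, hM.forall_sigma2Values_le_one⟩

lemma sigma2_le_one (hM : IsStochasticMap μA μB M) : sigma2 μA μB M ≤ 1 :=
  Real.sSup_le hM.forall_sigma2Values_le_one zero_le_one

lemma sum_sq_mulVec_le_sigma2_sq (hM : IsStochasticMap μA μB M) (g : B → ℝ)
    (hg : ∑ b, μB b * g b = 0) :
    ∑ a, μA a * (∑ b, M a b * g b) ^ 2 ≤ sigma2 μA μB M ^ 2 * ∑ b, μB b * g b ^ 2 := by
  set Mg := fun a => ∑ b, M a b * g b
  set L := ∑ a, μA a * Mg a ^ 2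
  set G := ∑ b, μB b * g b ^ 2
  have hLG : L ≤ G := hM.sum_sq_mulVec_le g
  have hL0 : 0 ≤ L := Finset.sum_nonneg fun a _ => mul_nonneg (hM.nonneg a) (sq_nonneg _)
  rcases hL0.eq_or_lt with hL | hL
  · rw [← hL]; exact mul_nonneg (sq_nonneg _) (hL.le.trans hLG)
  have hG : 0 < G := hL.trans_le hLG
  have hmem : √L / √G ∈ sigma2Values μA μB M := by
    refine ⟨fun a => Mg a / √L, fun b => g b / √G, ?_, ?_, sum_mul_div_sqrt_sq hL,
      sum_mul_div_sqrt_sq hG, ?_⟩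
    · simp only [mul_div_assoc', ← Finset.sum_div, Mg, hM.sum_mul_mulVec, hg, zero_div]
    · simp only [mul_div_assoc', ← Finset.sum_div, hg, zero_div]
    · have hMg : ∀ a, ∑ b, M a b * (g b / √G) = Mg a / √G := fun a => by
        simp only [Mg, mul_div_assoc', ← Finset.sum_div]
      simp only [hMg]
      rw [show ∑ a, μA a * (Mg a / √L) * (Mg a / √G) = L / (√L * √G) by
        simp only [L, Finset.sum_div]; exact Finset.sum_congr rfl fun a _ => by ring]
      have hsL0 := (Real.sqrt_pos.mpr hL).ne'
      field_simp
      exact Real.sq_sqrt hL.le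
  have hle : √L / √G ≤ sigma2 μA μB M :=
    le_csSup ⟨1, hM.forall_sigma2Values_le_one⟩ hmem
  rw [div_le_iff₀ (Real.sqrt_pos.mpr hG)] at hle
  calc L = √L ^ 2 := (Real.sq_sqrt hL.le).symm
    _ ≤ (sigma2 μA μB M * √G) ^ 2 := pow_le_pow_left₀ (Real.sqrt_nonneg _) hle 2
    _ = sigma2 μA μB M ^ 2 * G := by rw [mul_pow, Real.sq_sqrt hG.le]

end IsStochasticMap

end Stochastic

section Probability

variable (X : WPC n U)

lemma pi_eq_zero_of_notMem {ω : ∀ i, U i} (hω : ω ∉ X.Ω) : X.π ω = 0 :=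
  le_antisymm (not_lt.mp fun h => hω ((X.support ω).mp h)) (X.nonneg ω)

lemma pr_nonneg (E : (∀ i, U i) → Prop) : 0 ≤ pr X E :=
  Finset.sum_nonneg fun ω _ => by split_ifs <;> simp [X.nonneg]

lemma pi_le_pr {E : (∀ i, U i) → Prop} {ω : ∀ i, U i} (hω : E ω) : X.π ω ≤ pr X E := by
  have := Finset.single_le_sum (f := fun τ => if E τ then X.π τ else 0)
    (fun τ _ => by split_ifs <;> simp [X.nonneg]) (Finset.mem_univ ω)
  simpa [hω, pr] using this

lemma pr_mono {E F : (∀ i, U i) → Prop} (h : ∀ ω, E ω → F ω) : pr X E ≤ pr X F :=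
  Finset.sum_le_sum fun ω _ => by
    by_cases hE : E ω
    · simp [hE, h ω hE]
    · simp only [hE, if_false]; split_ifs <;> simp [X.nonneg]

def integralOn (E : (∀ i, U i) → Prop) (f : (∀ i, U i) → ℝ) : ℝ :=
  ∑ ω, if E ω then X.π ω * f ω else 0

lemma sum_mul_eq_sum_integralOn (T : Finset (Fin n)) (f : (∀ i, U i) → ℝ) :
    ∑ ω, X.π ω * f ω = ∑ c : PAssign U T, integralOn X (fun ω => restr T ω = c) f := by
  rw [← Finset.sum_fiberwise Finset.univ (restr T)]
  refine Finset.sum_congr rfl fun c _ => ?_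
  rw [Finset.sum_filter]
  exact Finset.sum_congr rfl fun ω _ => by split_ifs <;> rfl

lemma integralOn_congr {E : (∀ i, U i) → Prop} {f g : (∀ i, U i) → ℝ}
    (h : ∀ ω ∈ X.Ω, E ω → f ω = g ω) : integralOn X E f = integralOn X E g := by
  refine Finset.sum_congr rfl fun ω _ => ?_
  split_ifs with hE
  · by_cases hω : ω ∈ X.Ω
    · rw [h ω hω hE]
    · simp [pi_eq_zero_of_notMem X hω]
  · rfl

lemma integralOn_congr_event {E F : (∀ i, U i) → Prop} (h : ∀ ω, E ω ↔ F ω)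
    (f : (∀ i, U i) → ℝ) : integralOn X E f = integralOn X F f :=
  Finset.sum_congr rfl fun ω _ => if_congr (h ω) rfl rfl

lemma integralOn_comp_restr (E : (∀ i, U i) → Prop) (T : Finset (Fin n))
    (w : PAssign U T → ℝ) :
    integralOn X E (fun ω => w (restr T ω))
      = ∑ τ, pr X (fun ω => E ω ∧ restr T ω = τ) * w τ := by
  simp only [integralOn, pr, Finset.sum_mul]
  rw [Finset.sum_comm]
  refine Finset.sum_congr rfl fun ω _ => ?_
  rw [Fintype.sum_eq_single (restr T ω) fun τ hτ => by
    rw [if_neg fun h => hτ h.2.symm, zero_mul]]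
  by_cases hE : E ω <;> simp [hE]

lemma sum_pr_and_restr (E : (∀ i, U i) → Prop) (T : Finset (Fin n)) :
    ∑ τ : PAssign U T, pr X (fun ω => E ω ∧ restr T ω = τ) = pr X E := by
  simpa [integralOn, pr] using (integralOn_comp_restr X E T fun _ => 1).symm

lemma pr_restr_and_restr {S T : Finset (Fin n)} (α : PAssign U S) (τ : PAssign U T) :
    pr X (fun ω => restr S ω = α ∧ restr T ω = τ) = marg X S α * cmarg X α τ := by
  rcases eq_or_ne (marg X S α) 0 with h | h
  · rw [h, zero_mul]
    exact le_antisymm (h ▸ pr_mono X fun ω hω => hω.1) (pr_nonneg X _)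
  · rw [cmarg, mul_div_cancel₀ _ h]

lemma integralOn_restr_comp_restr (S T : Finset (Fin n)) (α : PAssign U S)
    (w : PAssign U T → ℝ) :
    integralOn X (fun ω => restr S ω = α) (fun ω => w (restr T ω))
      = marg X S α * ∑ τ, cmarg X α τ * w τ := by
  rw [integralOn_comp_restr, Finset.mul_sum]
  simp only [pr_restr_and_restr, mul_assoc]

lemma isStochasticMap_Cwalk {S I J : Finset (Fin n)} {α : PAssign U S}
    (hα : marg X S α ≠ 0) :
    IsStochasticMap (fun τI : PAssign U I => cmarg X α τI)
      (fun τJ : PAssign U J => cmarg X α τJ) (Cwalk X S I J α) where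
  nonneg τ := div_nonneg (pr_nonneg X _) (pr_nonneg X _)
  entry_nonneg τI τJ := div_nonneg (pr_nonneg X _) (pr_nonneg X _)
  row_sum τI hτI := by
    have hpr : pr X (fun ω => restr S ω = α ∧ restr I ω = τI) ≠ 0 := by
      intro h; exact hτI (by rw [cmarg, h, zero_div])
    simp only [Cwalk, ← Finset.sum_div, ← and_assoc, sum_pr_and_restr, div_self hpr]
  stationary τJ := by
    have hterm : ∀ τI : PAssign U I, cmarg X α τI * Cwalk X S I J α τI τJ
        = pr X (fun ω => (restr S ω = α ∧ restr J ω = τJ) ∧ restr I ω = τI) /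
            marg X S α := by
      intro τI
      have hre : pr X (fun ω => restr S ω = α ∧ restr I ω = τI ∧ restr J ω = τJ)
          = pr X (fun ω => (restr S ω = α ∧ restr J ω = τJ) ∧ restr I ω = τI) :=
        pr_congr X fun ω => by tauto
      rw [cmarg, Cwalk, hre]
      rcases eq_or_ne (pr X fun ω => restr S ω = α ∧ restr I ω = τI) 0 with h | h
      · have h0 : pr X (fun ω => (restr S ω = α ∧ restr J ω = τJ) ∧ restr I ω = τI) = 0 :=
          le_antisymm (h ▸ pr_mono X fun ω hω => ⟨hω.1.1, hω.2⟩) (pr_nonneg X _)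
        rw [h, h0]
        simp
      · field_simp
    simp only [hterm]
    rw [← Finset.sum_div, sum_pr_and_restr, cmarg]

lemma sigma2C_nonneg {S I J : Finset (Fin n)} {α : PAssign U S} (hα : marg X S α ≠ 0) :
    0 ≤ sigma2C X S I J α :=
  (isStochasticMap_Cwalk X hα).sigma2_nonneg

lemma sigma2C_le_one {S I J : Finset (Fin n)} {α : PAssign U S} (hα : marg X S α ≠ 0) :
    sigma2C X S I J α ≤ 1 :=
  (isStochasticMap_Cwalk X hα).sigma2_le_one

lemma epsIJ_nonneg (I J : Finset (Fin n)) : 0 ≤ epsIJ X I J :=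
  Real.sSup_nonneg <| by rintro r ⟨α, hα, rfl⟩; exact sigma2C_nonneg X hα.ne'

lemma epsIJ_le_one (I J : Finset (Fin n)) : epsIJ X I J ≤ 1 :=
  Real.sSup_le (by rintro r ⟨α, hα, rfl⟩; exact sigma2C_le_one X hα.ne') zero_le_one

lemma sigma2C_le_epsIJ {I J : Finset (Fin n)} {α : PAssign U (I ∪ J)ᶜ}
    (hα : 0 < marg X (I ∪ J)ᶜ α) : sigma2C X (I ∪ J)ᶜ I J α ≤ epsIJ X I J :=
  le_csSup ⟨1, by rintro r ⟨α', hα', rfl⟩; exact sigma2C_le_one X hα'.ne'⟩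
    ⟨α, hα, rfl⟩

lemma sq_epsIJ_le_one (I J : Finset (Fin n)) : epsIJ X I J ^ 2 ≤ 1 :=
  pow_le_one₀ (epsIJ_nonneg X I J) (epsIJ_le_one X I J)

lemma epsIJ_empty_left (J : Finset (Fin n)) : epsIJ X ∅ J = 0 := by
  have : Subsingleton (PAssign U (∅ : Finset (Fin n))) :=
    ⟨fun a b => funext fun i => absurd i.2 (Finset.notMem_empty _)⟩
  refine le_antisymm (Real.sSup_nonpos ?_) (epsIJ_nonneg X ∅ J)
  rintro r ⟨α, -, rfl⟩
  exact sigma2_eq_zero_of_subsingleton.le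

end Probability

set_option linter.unusedSectionVars false in
lemma restr_eq_restr_iff {S : Finset (Fin n)} {x y : ∀ i, U i} :
    restr S x = restr S y ↔ ∀ i ∈ S, x i = y i := by
  simp [restr, funext_iff]

set_option linter.unusedSectionVars false in
lemma _root_.DependsOn.compl_mono {β : Type*} {A B : Finset (Fin n)} (hAB : A ⊆ B)
    {u : (∀ i, U i) → β} (hu : DependsOn u ↑Bᶜ) : DependsOn u ↑Aᶜ :=
  hu.mono (Finset.coe_subset.mpr (Finset.compl_subset_compl.mpr hAB))

section Resample

variable (X : WPC n U)

lemma integralOn_const_mul (E : (∀ i, U i) → Prop) (c : ℝ) (f : (∀ i, U i) → ℝ) :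
    integralOn X E (fun ω => c * f ω) = c * integralOn X E f := by
  simp only [integralOn, Finset.mul_sum]
  exact Finset.sum_congr rfl fun ω _ => by split_ifs <;> ring

/-- `E[f | E]`, which is `0` when `E` is null. -/
def condAvg (E : (∀ i, U i) → Prop) (f : (∀ i, U i) → ℝ) : ℝ :=
  integralOn X E f / pr X E

lemma integralOn_eq_condAvg_mul_pr (E : (∀ i, U i) → Prop) (f : (∀ i, U i) → ℝ) :
    integralOn X E f = condAvg X E f * pr X E := by
  rcases eq_or_ne (pr X E) 0 with h | h
  · rw [h, mul_zero]
    refine Finset.sum_eq_zero fun ω _ => ?_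
    split_ifs with hE
    · rw [le_antisymm (h ▸ pi_le_pr X hE) (X.nonneg ω), zero_mul]
    · rfl
  · rw [condAvg, div_mul_cancel₀ _ h]

lemma condAvg_eq_of_forall {E : (∀ i, U i) → Prop} (hE : pr X E ≠ 0)
    {f : (∀ i, U i) → ℝ} {c : ℝ} (h : ∀ ω, E ω → f ω = c) : condAvg X E f = c := by
  have hconst : integralOn X E f = c * pr X E := by
    rw [integralOn_congr X fun ω _ hω => h ω hω, ← mul_one c, integralOn_const_mul, mul_one]
    simp [integralOn, pr]
  rw [condAvg, hconst, mul_div_assoc, div_self hE, mul_one]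

/-- `E[f | ω_{Tᶜ}]`; for `T = {i}` this is the update operator `Q_i`. -/
def resample (T : Finset (Fin n)) (f : (∀ i, U i) → ℝ) : (∀ i, U i) → ℝ :=
  fun ω => condAvg X (fun τ => restr Tᶜ τ = restr Tᶜ ω) f

lemma Qmat_mulVec (i : Fin n) (f : (∀ i, U i) → ℝ) :
    (Qmat X i).mulVec f = resample X {i} f := by
  funext ω
  have hpt : ∀ ω', pr X (fun τ => τ = ω' ∧ restr {i}ᶜ τ = restr {i}ᶜ ω)
      = if restr {i}ᶜ ω' = restr {i}ᶜ ω then X.π ω' else 0 := by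
    intro ω'
    rw [pr, Fintype.sum_eq_single ω' fun τ hτ => by simp [hτ]]
    simp
  simp only [Matrix.mulVec, dotProduct, Qmat, Matrix.of_apply, hpt, resample, condAvg, integralOn,
    Finset.sum_div]
  exact Finset.sum_congr rfl fun ω' _ => by split_ifs <;> ring

variable {X}

lemma resample_dependsOn (T : Finset (Fin n)) (f : (∀ i, U i) → ℝ) :
    DependsOn (resample X T f) ↑Tᶜ := by
  intro x y hxy
  simp only [resample, restr_eq_restr_iff.mpr hxy]

lemma resample_congr (T : Finset (Fin n)) {f g : (∀ i, U i) → ℝ} (h : Set.EqOn f g X.Ω) :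
    resample X T f = resample X T g := by
  funext ω
  simp only [resample, condAvg, integralOn_congr X fun ω hω _ => h hω]

lemma resample_eqOn (T : Finset (Fin n)) {f : (∀ i, U i) → ℝ} (hf : DependsOn f ↑Tᶜ) :
    Set.EqOn (resample X T f) f X.Ω := by
  intro ω hω
  have hpos : 0 < pr X (fun τ => restr Tᶜ τ = restr Tᶜ ω) :=
    ((X.support ω).mpr hω).trans_le (pi_le_pr X rfl)
  exact condAvg_eq_of_forall X hpos.ne' fun τ hτ => hf (restr_eq_restr_iff.mp hτ)

lemma wInner_congr_right (f : (∀ i, U i) → ℝ) {g g' : (∀ i, U i) → ℝ}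
    (h : Set.EqOn g g' X.Ω) : wInner X.π f g = wInner X.π f g' := by
  refine Finset.sum_congr rfl fun ω _ => ?_
  by_cases hω : ω ∈ X.Ω
  · rw [h hω]
  · simp [pi_eq_zero_of_notMem X hω]

lemma wInner_congr_left {f f' : (∀ i, U i) → ℝ} (h : Set.EqOn f f' X.Ω)
    (g : (∀ i, U i) → ℝ) : wInner X.π f g = wInner X.π f' g := by
  rw [wInner_comm, wInner_congr_right g h, wInner_comm]

lemma wInner_resample_left (T : Finset (Fin n)) (f g : (∀ i, U i) → ℝ) :
    wInner X.π (resample X T f) g = ∑ c : PAssign U Tᶜ,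
      condAvg X (fun ω => restr Tᶜ ω = c) f * condAvg X (fun ω => restr Tᶜ ω = c) g *
        pr X (fun ω => restr Tᶜ ω = c) := by
  simp only [wInner, mul_assoc]
  rw [sum_mul_eq_sum_integralOn X Tᶜ]
  refine Finset.sum_congr rfl fun c _ => ?_
  rw [integralOn_congr X (g := fun ω => condAvg X (fun ω => restr Tᶜ ω = c) f * g ω)
    fun ω _ hω => by simp only [resample, hω],
    integralOn_const_mul, integralOn_eq_condAvg_mul_pr]

lemma wInner_resample_comm (T : Finset (Fin n)) (f g : (∀ i, U i) → ℝ) :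
    wInner X.π (resample X T f) g = wInner X.π f (resample X T g) := by
  rw [wInner_comm _ f, wInner_resample_left, wInner_resample_left]
  exact Finset.sum_congr rfl fun c _ => by ring

lemma wInner_resample_of_dependsOn (T : Finset (Fin n)) (f : (∀ i, U i) → ℝ)
    {g : (∀ i, U i) → ℝ} (hg : DependsOn g ↑Tᶜ) :
    wInner X.π (resample X T f) g = wInner X.π f g := by
  rw [wInner_resample_comm, wInner_congr_right f (resample_eqOn T hg)]

lemma wInner_sub_resample_of_dependsOn (T : Finset (Fin n)) (f : (∀ i, U i) → ℝ)
    {g : (∀ i, U i) → ℝ} (hg : DependsOn g ↑Tᶜ) :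
    wInner X.π (f - resample X T f) g = 0 := by
  rw [wInner_sub_left, wInner_resample_of_dependsOn T f hg, sub_self]

lemma wInner_resample_self_le (T : Finset (Fin n)) (f : (∀ i, U i) → ℝ) :
    wInner X.π (resample X T f) (resample X T f) ≤ wInner X.π f f := by
  have hproj : wInner X.π (resample X T f) (resample X T f) = wInner X.π f (resample X T f) :=
    wInner_resample_of_dependsOn T f (resample_dependsOn T f)
  have hcs := wInner_sq_le X.nonneg f (resample X T f)
  have h0 := wInner_self_nonneg X.nonneg (resample X T f)
  have h1 := wInner_self_nonneg X.nonneg f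
  rw [← hproj] at hcs
  nlinarith

end Resample

lemma exists_eq_comp_of_factorsThrough {A B : Type*} {E : A → Prop} {u : A → ℝ} {φ : A → B}
    (h : ∀ a a', E a → E a' → φ a = φ a' → u a = u a') :
    ∃ g : B → ℝ, ∀ a, E a → u a = g (φ a) := by
  have hft : Function.FactorsThrough (u ∘ Subtype.val) (φ ∘ Subtype.val (p := E)) :=
    fun a a' haa' => h a a' a.2 a'.2 haa'
  exact ⟨Function.extend (φ ∘ Subtype.val (p := E)) (u ∘ Subtype.val) 0,
    fun a ha => (hft.extend_apply 0 ⟨a, ha⟩).symm⟩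

section Update

variable {X : WPC n U} {K : Finset (Fin n)} {i : Fin n}

lemma condAvg_congr_event {E F : (∀ i, U i) → Prop} (h : ∀ ω, E ω ↔ F ω)
    (f : (∀ i, U i) → ℝ) : condAvg X E f = condAvg X F f := by
  rw [condAvg, condAvg, integralOn_congr_event X h, pr_congr X h]

lemma condAvg_comp_restr (E : (∀ i, U i) → Prop) (T : Finset (Fin n))
    (w : PAssign U T → ℝ) :
    condAvg X E (fun ω => w (restr T ω))
      = ∑ τ, pr X (fun ω => E ω ∧ restr T ω = τ) / pr X E * w τ := by
  rw [condAvg, integralOn_comp_restr, Finset.sum_div]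
  exact Finset.sum_congr rfl fun τ _ => (div_mul_eq_mul_div _ _ _).symm

lemma restr_compl_singleton_eq_iff (hi : i ∉ K) {α : PAssign U (K ∪ {i})ᶜ}
    {ω τ : ∀ i, U i} (hω : restr (K ∪ {i})ᶜ ω = α) :
    restr {i}ᶜ τ = restr {i}ᶜ ω ↔
      restr (K ∪ {i})ᶜ τ = α ∧ restr K τ = restr K ω := by
  simp only [← hω, restr_eq_restr_iff, Finset.mem_compl, Finset.mem_union,
    Finset.mem_singleton]
  constructor
  · intro h
    exact ⟨fun k hk => h k fun hki => hk (Or.inr hki),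
      fun k hk => h k fun hki => hi (hki ▸ hk)⟩
  · rintro ⟨h1, h2⟩ k hk
    by_cases hkK : k ∈ K
    · exact h2 k hkK
    · exact h1 k (by tauto)

lemma exists_resample_eq_Cwalk (hi : i ∉ K) {u : (∀ i, U i) → ℝ} (hu : DependsOn u ↑Kᶜ)
    (α : PAssign U (K ∪ {i})ᶜ) :
    ∃ g : PAssign U {i} → ℝ, ∀ ω, restr (K ∪ {i})ᶜ ω = α →
      u ω = g (restr {i} ω) ∧
      resample X {i} u ω = ∑ τ, Cwalk X (K ∪ {i})ᶜ K {i} α (restr K ω) τ * g τ := by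
  obtain ⟨g, hg⟩ := exists_eq_comp_of_factorsThrough
    (E := fun ω => restr (K ∪ {i})ᶜ ω = α) (u := u) (φ := restr {i})
    fun ω ω' hω hω' hi' => by
      refine hu fun k hk => ?_
      by_cases hki : k = i
      · exact restr_eq_restr_iff.mp hi' k (Finset.mem_singleton.mpr hki)
      · rw [← hω'] at hω
        refine restr_eq_restr_iff.mp hω k ?_
        simp_all
  refine ⟨g, fun ω hω => ⟨hg ω hω, ?_⟩⟩
  have hfiber : condAvg X (fun τ => restr (K ∪ {i})ᶜ τ = α ∧ restr K τ = restr K ω) u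
      = condAvg X (fun τ => restr (K ∪ {i})ᶜ τ = α ∧ restr K τ = restr K ω)
          (fun τ => g (restr {i} τ)) := by
    rw [condAvg, condAvg, integralOn_congr X fun τ _ hτ => hg τ hτ.1]
  rw [resample, condAvg_congr_event fun τ => restr_compl_singleton_eq_iff hi hω, hfiber,
    condAvg_comp_restr]
  refine Finset.sum_congr rfl fun τ _ => ?_
  rw [Cwalk, pr_congr X fun _ => and_assoc]

end Update

section Contraction

variable {X : WPC n U} {K : Finset (Fin n)} {i : Fin n}

lemma integralOn_sq_resample_le (hi : i ∉ K) {u : (∀ i, U i) → ℝ} (hu : DependsOn u ↑Kᶜ)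
    (α : PAssign U (K ∪ {i})ᶜ)
    (hmean : integralOn X (fun ω => restr (K ∪ {i})ᶜ ω = α) u = 0) :
    integralOn X (fun ω => restr (K ∪ {i})ᶜ ω = α) (fun ω => resample X {i} u ω ^ 2)
      ≤ epsIJ X K {i} ^ 2 *
          integralOn X (fun ω => restr (K ∪ {i})ᶜ ω = α) (fun ω => u ω ^ 2) := by
  obtain ⟨g, hg⟩ := exists_resample_eq_Cwalk (X := X) hi hu α
  set C := Cwalk X (K ∪ {i})ᶜ K {i} α
  rw [integralOn_congr X fun ω _ hω => congrArg (· ^ 2) (hg ω hω).2,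
    integralOn_congr X fun ω _ hω => congrArg (· ^ 2) (hg ω hω).1,
    integralOn_restr_comp_restr X _ K α fun τI => (∑ τ, C τI τ * g τ) ^ 2,
    integralOn_restr_comp_restr X _ {i} α fun τ => g τ ^ 2]
  rw [integralOn_congr X fun ω _ hω => (hg ω hω).1, integralOn_restr_comp_restr] at hmean
  rcases eq_or_ne (marg X (K ∪ {i})ᶜ α) 0 with hα | hα
  · simp [hα]
  have hαpos : 0 < marg X (K ∪ {i})ᶜ α := (pr_nonneg X _).lt_of_ne' hα
  have hσ : sigma2C X (K ∪ {i})ᶜ K {i} α ^ 2 ≤ epsIJ X K {i} ^ 2 :=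
    pow_le_pow_left₀ (sigma2C_nonneg X hα) (sigma2C_le_epsIJ X hαpos) 2
  have hcontr := (isStochasticMap_Cwalk X (I := K) (J := {i}) hα).sum_sq_mulVec_le_sigma2_sq g
    ((mul_eq_zero.mp hmean).resolve_left hα)
  rw [mul_left_comm]
  refine mul_le_mul_of_nonneg_left (hcontr.trans ?_) hαpos.le
  exact mul_le_mul_of_nonneg_right hσ
    (Finset.sum_nonneg fun τ _ => mul_nonneg (div_nonneg (pr_nonneg X _) hαpos.le) (sq_nonneg _))

lemma wInner_resample_singleton_le (hi : i ∉ K) {u : (∀ i, U i) → ℝ} (hu : DependsOn u ↑Kᶜ)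
    (hperp : ∀ w, DependsOn w ↑(K ∪ {i})ᶜ → wInner X.π u w = 0) :
    wInner X.π (resample X {i} u) (resample X {i} u) ≤ epsIJ X K {i} ^ 2 * wInner X.π u u := by
  simp only [wInner_self_eq]
  rw [sum_mul_eq_sum_integralOn X (K ∪ {i})ᶜ, sum_mul_eq_sum_integralOn X (K ∪ {i})ᶜ,
    Finset.mul_sum]
  refine Finset.sum_le_sum fun α _ => integralOn_sq_resample_le hi hu α ?_
  have hind : DependsOn (fun ω => if restr (K ∪ {i})ᶜ ω = α then (1 : ℝ) else 0)
      ↑(K ∪ {i})ᶜ := fun x y hxy => by simp only [restr_eq_restr_iff.mpr hxy]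
  rw [← hperp _ hind]
  refine Finset.sum_congr rfl fun ω _ => ?_
  by_cases h : restr (K ∪ {i})ᶜ ω = α <;> simp [h]

lemma wInner_resample_resample_le (hi : i ∉ K) {g : (∀ i, U i) → ℝ}
    (hg : ∀ w, DependsOn w ↑(K ∪ {i})ᶜ → wInner X.π g w = 0) :
    wInner X.π (resample X K (resample X {i} g)) (resample X K (resample X {i} g))
      ≤ epsIJ X K {i} ^ 2 * wInner X.π g g := by
  set y := resample X {i} g
  set u := resample X K y
  have hu : DependsOn u ↑Kᶜ := resample_dependsOn K y
  have hperp : ∀ w, DependsOn w ↑(K ∪ {i})ᶜ → wInner X.π u w = 0 := fun w hw => by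
    rw [wInner_resample_of_dependsOn K y (hw.compl_mono Finset.subset_union_left),
      wInner_resample_of_dependsOn {i} g (hw.compl_mono Finset.subset_union_right), hg w hw]
  have hself : wInner X.π u u = wInner X.π (resample X {i} u) g := by
    calc wInner X.π u u = wInner X.π y u := wInner_resample_of_dependsOn K y hu
      _ = wInner X.π u y := wInner_comm _ _ _
      _ = wInner X.π (resample X {i} u) g := (wInner_resample_comm {i} u g).symm
  have hstar := wInner_resample_singleton_le hi hu hperp
  have hcs := wInner_sq_le X.nonneg (resample X {i} u) g
  have hu0 := wInner_self_nonneg X.nonneg u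
  have hg0 := wInner_self_nonneg X.nonneg g
  rw [← hself] at hcs
  have key : wInner X.π u u * wInner X.π u u
      ≤ epsIJ X K {i} ^ 2 * wInner X.π g g * wInner X.π u u := by
    nlinarith [mul_le_mul_of_nonneg_right hstar hg0]
  rcases hu0.eq_or_lt with h0 | hpos
  · rw [← h0]; exact mul_nonneg (sq_nonneg _) hg0
  · exact le_of_mul_le_mul_right key hpos

end Contraction

section Sweep

variable {X : WPC n U}

def sweep (X : WPC n U) {m : ℕ} (f : Fin m → Fin n) : Matrix (∀ i, U i) (∀ i, U i) ℝ :=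
  (List.ofFn fun j => Qmat X (f j)).prod

lemma sweep_succ {m : ℕ} (f : Fin (m + 1) → Fin n) :
    sweep X f = Qmat X (f 0) * sweep X (fun j => f j.succ) := by
  rw [sweep, List.ofFn_succ, List.prod_cons, sweep]

lemma sweep_succ' {m : ℕ} (f : Fin (m + 1) → Fin n) :
    sweep X f = sweep X (fun j => f j.castSucc) * Qmat X (f (Fin.last m)) := by
  rw [sweep, List.ofFn_succ', List.prod_concat, sweep]

lemma image_succ_subset_image {m : ℕ} (f : Fin (m + 1) → Fin n) :
    Finset.univ.image (fun j : Fin m => f j.succ) ⊆ Finset.univ.image f :=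
  Finset.image_subset_iff.mpr fun _ _ => Finset.mem_image_of_mem f (Finset.mem_univ _)

lemma sweep_mulVec_eqOn {m : ℕ} (f : Fin m → Fin n) {u : (∀ i, U i) → ℝ}
    (hu : DependsOn u ↑(Finset.univ.image f)ᶜ) : Set.EqOn ((sweep X f).mulVec u) u X.Ω := by
  induction m with
  | zero => simpa [sweep] using Set.eqOn_refl u _
  | succ m ih =>
    rw [sweep_succ, ← Matrix.mulVec_mulVec, Qmat_mulVec,
      resample_congr _ (ih _ (hu.compl_mono (image_succ_subset_image f)))]
    exact resample_eqOn _ (hu.compl_mono (by simp))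

lemma wInner_sweep_mulVec_of_dependsOn {m : ℕ} (f : Fin m → Fin n) (z : (∀ i, U i) → ℝ)
    {w : (∀ i, U i) → ℝ} (hw : DependsOn w ↑(Finset.univ.image f)ᶜ) :
    wInner X.π ((sweep X f).mulVec z) w = wInner X.π z w := by
  induction m with
  | zero => simp [sweep]
  | succ m ih =>
    rw [sweep_succ, ← Matrix.mulVec_mulVec, Qmat_mulVec,
      wInner_resample_of_dependsOn _ _ (hw.compl_mono (by simp)),
      ih _ (hw.compl_mono (image_succ_subset_image f))]

end Sweep

section Main

variable {X : WPC n U}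

lemma prod_one_sub_sq_epsIJ_nonneg {ι : Type*} (s : Finset ι) (I J : ι → Finset (Fin n)) :
    0 ≤ ∏ j ∈ s, (1 - epsIJ X (I j) (J j) ^ 2) :=
  Finset.prod_nonneg fun _ _ => sub_nonneg.mpr (sq_epsIJ_le_one X _ _)

lemma prod_one_sub_sq_epsIJ_le_one {ι : Type*} (s : Finset ι) (I J : ι → Finset (Fin n)) :
    ∏ j ∈ s, (1 - epsIJ X (I j) (J j) ^ 2) ≤ 1 :=
  Finset.prod_le_one (fun _ _ => sub_nonneg.mpr (sq_epsIJ_le_one X _ _))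
    fun _ _ => sub_le_self _ (sq_nonneg _)

lemma image_filter_lt_castSucc {m : ℕ} (f : Fin (m + 1) → Fin n) (j : Fin m) :
    (Finset.univ.filter fun k => k < j.castSucc).image f
      = (Finset.univ.filter fun k => k < j).image fun k => f k.castSucc := by
  ext x
  simp [Fin.exists_fin_succ', not_lt.mpr (Fin.castSucc_lt_last j).le]

lemma image_filter_lt_last {m : ℕ} (f : Fin (m + 1) → Fin n) :
    (Finset.univ.filter fun k => k < Fin.last m).image f
      = Finset.univ.image fun k : Fin m => f k.castSucc := by
  ext x
  simp [Fin.exists_fin_succ', Fin.castSucc_lt_last]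

lemma image_eq_image_castSucc_union_last {m : ℕ} (f : Fin (m + 1) → Fin n) :
    Finset.univ.image f
      = (Finset.univ.image fun k : Fin m => f k.castSucc) ∪ {f (Fin.last m)} := by
  ext x
  simp [Fin.exists_fin_succ', or_comm, eq_comm]

/-- The sweep is the identity on the projection of `y` onto the functions it cannot see, and
keeps the remainder orthogonal to them. -/
lemma wInner_sweep_mulVec_eq_add {m : ℕ} (f : Fin m → Fin n) (y : (∀ i, U i) → ℝ) :
    wInner X.π ((sweep X f).mulVec y) ((sweep X f).mulVec y)
      = wInner X.π (resample X (Finset.univ.image f) y) (resample X (Finset.univ.image f) y) +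
        wInner X.π ((sweep X f).mulVec (y - resample X (Finset.univ.image f) y))
          ((sweep X f).mulVec (y - resample X (Finset.univ.image f) y)) := by
  set u := resample X (Finset.univ.image f) y
  have hu : DependsOn u ↑(Finset.univ.image f)ᶜ := resample_dependsOn _ y
  have hPu := sweep_mulVec_eqOn (X := X) f hu
  have hcross : wInner X.π ((sweep X f).mulVec u) ((sweep X f).mulVec (y - u)) = 0 := by
    rw [wInner_congr_left hPu, wInner_comm, wInner_sweep_mulVec_of_dependsOn f _ hu,
      wInner_sub_resample_of_dependsOn _ y hu]
  conv_lhs => rw [← add_sub_cancel u y, Matrix.mulVec_add]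
  rw [wInner_add_self_of_eq_zero hcross, wInner_congr_left hPu, wInner_congr_right u hPu]

theorem wInner_sweep_mulVec_le {m : ℕ} (f : Fin m → Fin n) (hf : Function.Injective f)
    (g : (∀ i, U i) → ℝ)
    (hg : ∀ w, DependsOn w ↑(Finset.univ.image f)ᶜ → wInner X.π g w = 0) :
    wInner X.π ((sweep X f).mulVec g) ((sweep X f).mulVec g)
      ≤ (1 - ∏ j, (1 - epsIJ X ((Finset.univ.filter fun k => k < j).image f) {f j} ^ 2)) *
          wInner X.π g g := by
  induction m generalizing g with
  | zero =>
    have hgg := hg g (by simpa using dependsOn_univ g)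
    simp [sweep, hgg]
  | succ m ih =>
    set f' := fun k : Fin m => f k.castSucc
    set i := f (Fin.last m)
    set K := Finset.univ.image f'
    have hi : i ∉ K := by
      simp [K, f', i, hf.eq_iff, Fin.castSucc_ne_last]
    set y := resample X {i} g
    set z := y - resample X K y
    have hIH := ih f' (hf.comp (Fin.castSucc_injective m)) z
      fun w hw => wInner_sub_resample_of_dependsOn K y hw
    have hpyth :
        wInner X.π y y = wInner X.π (resample X K y) (resample X K y) + wInner X.π z z := by
      conv_lhs => rw [← add_sub_cancel (resample X K y) y]
      refine wInner_add_self_of_eq_zero ?_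
      rw [wInner_comm, wInner_sub_resample_of_dependsOn K y (resample_dependsOn K y)]
    have hu := wInner_resample_resample_le hi
      (by rwa [image_eq_image_castSucc_union_last] at hg)
    have hy := wInner_resample_self_le (X := X) {i} g
    rw [sweep_succ', ← Matrix.mulVec_mulVec, Qmat_mulVec, wInner_sweep_mulVec_eq_add,
      Fin.prod_univ_castSucc, image_filter_lt_last]
    simp only [image_filter_lt_castSucc]
    set q := ∏ j : Fin m, (1 - epsIJ X ((Finset.univ.filter fun k => k < j).image f') {f' j} ^ 2)
    have hq0 : 0 ≤ q := prod_one_sub_sq_epsIJ_nonneg _ _ _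
    have hq1 : q ≤ 1 := prod_one_sub_sq_epsIJ_le_one _ _ _
    nlinarith [mul_le_mul_of_nonneg_left hu hq0, mul_le_mul_of_nonneg_left hy (sub_nonneg.mpr hq1)]

end Main

lemma wInner_eq_zero_of_dependsOn_empty {X : WPC n U} {g w : (∀ i, U i) → ℝ}
    (hg : ∑ ω, X.π ω * g ω = 0) (hw : DependsOn w ∅) : wInner X.π g w = 0 := by
  obtain ⟨ω₀, -⟩ := X.nonempty
  simp only [wInner, hw.empty _ ω₀, ← Finset.sum_mul, hg, zero_mul]

theorem seq_sweep_sigma2_bound_general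
    (X : WPC n U) (s : Equiv.Perm (Fin n)) :
    sigma2P X s ^ 2 ≤
      1 - ∏ j ∈ Finset.univ.filter (fun j : Fin n => 0 < (j : ℕ)),
        (1 - epsIJ X ((Finset.univ.filter fun k : Fin n => k < j).image fun k => s k) {s j} ^ 2) ∧
    1 - sigma2P X s ≥
      1 - Real.sqrt (1 - ∏ j ∈ Finset.univ.filter (fun j : Fin n => 0 < (j : ℕ)),
        (1 - epsIJ X ((Finset.univ.filter fun k : Fin n => k < j).image fun k => s k) {s j} ^ 2)) := by
  set q := ∏ j ∈ Finset.univ.filter (fun j : Fin n => 0 < (j : ℕ)),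
    (1 - epsIJ X ((Finset.univ.filter fun k : Fin n => k < j).image fun k => s k) {s j} ^ 2)
  -- the factor `j = 0` is `1`, as `ε^{∅ → s 0} = 0`
  have hq : q = ∏ j, (1 - epsIJ X ((Finset.univ.filter fun k => k < j).image s) {s j} ^ 2) := by
    refine Finset.prod_filter_of_ne fun j _ hj => Nat.pos_of_ne_zero fun h0 => hj ?_
    have hempty : (Finset.univ.filter fun k : Fin n => k < j) = ∅ :=
      Finset.filter_false_of_mem fun k _ => by simp [Fin.lt_def, h0]
    simp [hempty, epsIJ_empty_left]
  have hbound : ∀ g : (∀ i, U i) → ℝ, ∑ ω, X.π ω * g ω = 0 →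
      ∑ ω, X.π ω * (∑ ω', Psq X s ω ω' * g ω') ^ 2
        ≤ (1 - q) * ∑ ω, X.π ω * g ω ^ 2 := by
    intro g hg
    have hsweep := wInner_sweep_mulVec_le s s.injective g fun w hw =>
      wInner_eq_zero_of_dependsOn_empty hg
        (by simpa [Finset.image_univ_of_surjective s.surjective] using hw)
    rwa [wInner_self_eq, wInner_self_eq, ← hq] at hsweep
  have hq1 : 0 ≤ 1 - q := sub_nonneg.mpr (prod_one_sub_sq_epsIJ_le_one _ _ _)
  exact ⟨sq_sigma2_le X.nonneg hq1 hbound, sub_le_sub_left (sigma2_le_sqrt X.nonneg hbound) 1⟩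

theorem seq_sweep_sigma2_bound
    (X : WPC n U) (hconn : linkConnected X) (s : Equiv.Perm (Fin n)) :
    sigma2P X s ^ 2 ≤
      1 - ∏ j ∈ Finset.univ.filter (fun j : Fin n => 0 < (j : ℕ)),
        (1 - epsIJ X ((Finset.univ.filter fun k : Fin n => k < j).image fun k => s k) {s j} ^ 2) ∧
    1 - sigma2P X s ≥
      1 - Real.sqrt (1 - ∏ j ∈ Finset.univ.filter (fun j : Fin n => 0 < (j : ℕ)),
        (1 - epsIJ X ((Finset.univ.filter fun k : Fin n => k < j).image fun k => s k) {s j} ^ 2)) :=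
  seq_sweep_sigma2_bound_general X s

end PaperFormal
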